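/- arXiv:2109.06666 — 9 statements merged into one kernel-verified Lean document; each statement's English description precedes it below -/
import Mathlib

section
/- Let f be a minimum-weight restrained double Roman dominating function of a graph G for which the set V_0 = {v : f(v) = 0} has maximum cardinality among all minimum-weight RDRD functions. Then V_1 = {v : f(v) = 1} is an independent set, and no vertex of V_1 has a neighbor in V_0. -/
open Finset

/-- A restrained double Roman dominating function. -/
def IsRDRD {V : Type*} (G : SimpleGraph V) (f : V → ℕ) : Prop :=
  (∀ v, f v ≤ 3) ∧
  (∀ v, f v = 0 →
    (∃ u, G.Adj v u ∧ f u = 3) ∨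
    (∃ u w, G.Adj v u ∧ G.Adj v w ∧ u ≠ w ∧ f u = 2 ∧ f w = 2)) ∧
  (∀ v, f v = 1 → ∃ u, G.Adj v u ∧ 2 ≤ f u) ∧
  (∀ v, f v = 0 → ∃ u, G.Adj v u ∧ f u = 0)

/-- The restrained double Roman domination number. -/
noncomputable def rdrNum {V : Type*} [Fintype V] (G : SimpleGraph V) : ℕ :=
  sInf {k | ∃ f : V → ℕ, IsRDRD G f ∧ ∑ v, f v = k}

def IsDomSet {V : Type*} (G : SimpleGraph V) (S : Set V) : Prop :=
  ∀ v ∉ S, ∃ u ∈ S, G.Adj v u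

def IsRDomSet {V : Type*} (G : SimpleGraph V) (S : Set V) : Prop :=
  IsDomSet G S ∧ ∀ v ∉ S, ∃ u ∉ S, G.Adj v u

def IsR2DomSet {V : Type*} (G : SimpleGraph V) (S : Set V) : Prop :=
  (∀ v ∉ S, ∃ u w, u ∈ S ∧ w ∈ S ∧ u ≠ w ∧ G.Adj v u ∧ G.Adj v w) ∧
  ∀ v ∉ S, ∃ u ∉ S, G.Adj v u

noncomputable def domNum {V : Type*} [Fintype V] (G : SimpleGraph V) : ℕ :=
  sInf {k | ∃ S : Finset V, IsDomSet G ↑S ∧ S.card = k}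

noncomputable def rDomNum {V : Type*} [Fintype V] (G : SimpleGraph V) : ℕ :=
  sInf {k | ∃ S : Finset V, IsRDomSet G ↑S ∧ S.card = k}

noncomputable def r2DomNum {V : Type*} [Fintype V] (G : SimpleGraph V) : ℕ :=
  sInf {k | ∃ S : Finset V, IsR2DomSet G ↑S ∧ S.card = k}

/-- A restrained Roman dominating function. -/
def IsRRD {V : Type*} (G : SimpleGraph V) (f : V → ℕ) : Prop :=
  (∀ v, f v ≤ 2) ∧
  (∀ v, f v = 0 → ∃ u, G.Adj v u ∧ f u = 2) ∧
  (∀ v, f v = 0 → ∃ u, G.Adj v u ∧ f u = 0)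

noncomputable def rrNum {V : Type*} [Fintype V] (G : SimpleGraph V) : ℕ :=
  sInf {k | ∃ f : V → ℕ, IsRRD G f ∧ ∑ v, f v = k}

/-- A star: all edges are incident to one common vertex. -/
def IsStar {V : Type*} (G : SimpleGraph V) : Prop :=
  ∃ x : V, ∀ ⦃a b : V⦄, G.Adj a b → a = x ∨ b = x

/-- The join of two graphs. -/
def joinG {α β : Type*} (G : SimpleGraph α) (H : SimpleGraph β) : SimpleGraph (α ⊕ β) :=
  SimpleGraph.fromRel (fun x y => match x, y with
    | Sum.inl a, Sum.inl b => G.Adj a b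
    | Sum.inr a, Sum.inr b => H.Adj a b
    | Sum.inl _, Sum.inr _ => True
    | Sum.inr _, Sum.inl _ => True)

/-- The disjoint union of two graphs. -/
def dUnion {α β : Type*} (G : SimpleGraph α) (H : SimpleGraph β) : SimpleGraph (α ⊕ β) :=
  SimpleGraph.fromRel (fun x y => match x, y with
    | Sum.inl a, Sum.inl b => G.Adj a b
    | Sum.inr a, Sum.inr b => H.Adj a b
    | _, _ => False)

/-!
Let `u` be a vertex with `f u = 1` and `z` a neighbour with `f z ≥ 2`. Lowering `u` to `0` and
raising `z` to `3` does not increase the weight and keeps `f` double Roman dominating; it stays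
restrained as soon as `u` gets a neighbour of value `0`. If `u` has a neighbour in `V₀` this gives
a minimum RDRD function with a larger `V₀`. If `u` has a neighbour `v ∈ V₁`, do the same at `u`
and `v` simultaneously: they become each other's `0`-neighbour, and the two lost units pay for
the (at most two) raised dominators.
-/

section Reassign

variable {V : Type*} [DecidableEq V]

def reassign (f : V → ℕ) (S T : Finset V) : V → ℕ :=
  fun x => if x ∈ S then 0 else if x ∈ T then 3 else f x

variable {G : SimpleGraph V} {f : V → ℕ} {S T : Finset V}

lemma reassign_of_mem_left {x : V} (hx : x ∈ S) : reassign f S T x = 0 := if_pos hx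

lemma reassign_of_mem_right (hS : ∀ x ∈ S, f x = 1) (hT : ∀ x ∈ T, 2 ≤ f x) {x : V}
    (hx : x ∈ T) : reassign f S T x = 3 := by
  have hxS : x ∉ S := fun h => by have := hS x h; have := hT x hx; omega
  simp [reassign, hxS, hx]

lemma reassign_le_three (hf : IsRDRD G f) (x : V) : reassign f S T x ≤ 3 := by
  unfold reassign; split_ifs <;> first | omega | exact hf.1 x

lemma reassign_eq_zero_of_eq_zero (hT : ∀ x ∈ T, 2 ≤ f x) {x : V}
    (hx : f x = 0) : reassign f S T x = 0 := by
  unfold reassign; split_ifs with h₁ h₂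
  · rfl
  · have := hT x h₂; omega
  · exact hx

lemma reassign_eq_or_eq_three (hS : ∀ x ∈ S, f x = 1) {x : V} (hx : 2 ≤ f x) :
    reassign f S T x = f x ∨ reassign f S T x = 3 := by
  unfold reassign; split_ifs with h₁ h₂
  · have := hS x h₁; omega
  · exact Or.inr rfl
  · exact Or.inl rfl

lemma eq_one_of_reassign_eq_one {x : V} (hx : reassign f S T x = 1) : f x = 1 := by
  unfold reassign at hx; split_ifs at hx <;> omega

lemma eq_zero_of_reassign_eq_zero_of_notMem {x : V} (hx : reassign f S T x = 0) (hxS : x ∉ S) :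
    f x = 0 := by
  unfold reassign at hx; split_ifs at hx; exact hx

theorem isRDRD_reassign (hf : IsRDRD G f) (hS : ∀ x ∈ S, f x = 1) (hT : ∀ x ∈ T, 2 ≤ f x)
    (hST : ∀ x ∈ S, ∃ t ∈ T, G.Adj x t) (hS0 : ∀ x ∈ S, ∃ y, G.Adj x y ∧ (y ∈ S ∨ f y = 0)) :
    IsRDRD G (reassign f S T) := by
  refine ⟨reassign_le_three hf, fun v hv => ?_, fun v hv => ?_, fun v hv => ?_⟩
  · obtain ⟨-, hdom, -, -⟩ := hf
    by_cases hvS : v ∈ S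
    · obtain ⟨t, htT, hvt⟩ := hST v hvS
      exact Or.inl ⟨t, hvt, reassign_of_mem_right hS hT htT⟩
    rcases hdom v (eq_zero_of_reassign_eq_zero_of_notMem hv hvS) with
      ⟨u, hvu, hu⟩ | ⟨u, w, hvu, hvw, huw, hu, hw⟩
    · refine Or.inl ⟨u, hvu, ?_⟩
      rcases reassign_eq_or_eq_three (T := T) hS (by omega : 2 ≤ f u) with h | h <;> omega
    · rcases reassign_eq_or_eq_three (T := T) hS hu.ge with hu' | hu'
      · rcases reassign_eq_or_eq_three (T := T) hS hw.ge with hw' | hw'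
        · exact Or.inr ⟨u, w, hvu, hvw, huw, hu' ▸ hu, hw' ▸ hw⟩
        · exact Or.inl ⟨w, hvw, hw'⟩
      · exact Or.inl ⟨u, hvu, hu'⟩
  · obtain ⟨u, hvu, hu⟩ := hf.2.2.1 v (eq_one_of_reassign_eq_one hv)
    exact ⟨u, hvu, by rcases reassign_eq_or_eq_three (T := T) hS hu with h | h <;> omega⟩
  · by_cases hvS : v ∈ S
    · obtain ⟨y, hvy, hy | hy⟩ := hS0 v hvS
      · exact ⟨y, hvy, reassign_of_mem_left hy⟩
      · exact ⟨y, hvy, reassign_eq_zero_of_eq_zero hT hy⟩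
    · obtain ⟨y, hvy, hy⟩ := hf.2.2.2 v (eq_zero_of_reassign_eq_zero_of_notMem hv hvS)
      exact ⟨y, hvy, reassign_eq_zero_of_eq_zero hT hy⟩

lemma sum_reassign_add_card_le [Fintype V] (hS : ∀ x ∈ S, f x = 1) (hT : ∀ x ∈ T, 2 ≤ f x) :
    ∑ x, reassign f S T x + #S ≤ ∑ x, f x + #T := by
  have hpt : ∀ x, reassign f S T x + (if x ∈ S then 1 else 0) ≤
      f x + (if x ∈ T then 1 else 0) := by
    intro x
    by_cases hxS : x ∈ S
    · simp [reassign, hxS, hS x hxS]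
    by_cases hxT : x ∈ T
    · simp [reassign, hxS, hxT]; have := hT x hxT; omega
    · simp [reassign, hxS, hxT]
  simpa [sum_add_distrib, sum_boole] using sum_le_sum fun x (_ : x ∈ univ) => hpt x

lemma filter_eq_zero_ssubset_reassign [Fintype V] (hS : ∀ x ∈ S, f x = 1)
    (hT : ∀ x ∈ T, 2 ≤ f x) (hSne : S.Nonempty) :
    univ.filter (fun v => f v = 0) ⊂ univ.filter (fun v => reassign f S T v = 0) := by
  obtain ⟨x, hx⟩ := hSne
  refine (ssubset_iff_of_subset fun v hv => ?_).2 ⟨x, ?_, ?_⟩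
  · simp only [mem_filter, mem_univ, true_and] at hv ⊢
    exact reassign_eq_zero_of_eq_zero hT hv
  · simp [reassign_of_mem_left hx]
  · simp [hS x hx]

lemma IsRDRD.eq_empty_of_reassign_of_extremal [Fintype V] (hf : IsRDRD G f)
    (hmin : ∑ v, f v = rdrNum G)
    (hmax : ∀ g : V → ℕ, IsRDRD G g → ∑ v, g v = rdrNum G →
      (univ.filter (fun v => g v = 0)).card ≤ (univ.filter (fun v => f v = 0)).card)
    (hS : ∀ x ∈ S, f x = 1) (hT : ∀ x ∈ T, 2 ≤ f x)
    (hST : ∀ x ∈ S, ∃ t ∈ T, G.Adj x t) (hS0 : ∀ x ∈ S, ∃ y, G.Adj x y ∧ (y ∈ S ∨ f y = 0))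
    (hcard : #T ≤ #S) : S = ∅ := by
  have hg := isRDRD_reassign hf hS hT hST hS0
  have hweight : ∑ v, reassign f S T v = rdrNum G :=
    le_antisymm (by have := sum_reassign_add_card_le hS hT; omega) (Nat.sInf_le ⟨_, hg, rfl⟩)
  by_contra hne
  exact (hmax _ hg hweight).not_gt
    (card_lt_card (filter_eq_zero_ssubset_reassign hS hT (nonempty_iff_ne_empty.2 hne)))

end Reassign

theorem stmt_1 {V : Type*} [Fintype V] (G : SimpleGraph V)
    (f : V → ℕ) (hf : IsRDRD G f) (hmin : ∑ v, f v = rdrNum G)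
    (hmax : ∀ g : V → ℕ, IsRDRD G g → ∑ v, g v = rdrNum G →
      (Finset.univ.filter (fun v => g v = 0)).card ≤
        (Finset.univ.filter (fun v => f v = 0)).card) :
    (∀ u v : V, f u = 1 → f v = 1 → ¬ G.Adj u v) ∧
    (∀ u v : V, f u = 1 → f v = 0 → ¬ G.Adj u v) := by
  classical
  constructor
  · intro u v hu hv huv
    obtain ⟨z, huz, hz⟩ := hf.2.2.1 u hu
    obtain ⟨z', hvz', hz'⟩ := hf.2.2.1 v hv
    refine insert_ne_empty u {v} <| hf.eq_empty_of_reassign_of_extremal (T := {z, z'}) hmin hmax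
      (by simp [hu, hv]) (by simp [hz, hz']) (by simp [huz, hvz']) ?_
      (by rw [card_pair huv.ne]; exact card_le_two)
    simp only [mem_insert, mem_singleton, forall_eq_or_imp, forall_eq]
    exact ⟨⟨v, huv, by simp⟩, ⟨u, huv.symm, by simp⟩⟩
  · intro u w hu hw huw
    obtain ⟨z, huz, hz⟩ := hf.2.2.1 u hu
    exact singleton_ne_empty u <| hf.eq_empty_of_reassign_of_extremal (T := {z}) hmin hmax
      (by simpa using hu) (by simpa using hz) (by simpa using huz)
      (by simpa using ⟨w, huw, Or.inr hw⟩) le_rfl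
end

section
/- For any graph G of order n with maximum degree Δ ≥ 1, γ_rdR(G) ≥ (2n + (Δ − 2)·γ_r(G)) / Δ. -/
open Finset

/-!
Take a minimum RDRD function `f`, and let `S` and `Z` be the vertices where `f` is nonzero and
zero. `S` is a restrained dominating set, so `γ_r(G) ≤ |S|`. Each vertex of `Z` sees total
excess `∑ (f u - 1) ≥ 2` on its neighbourhood, and each vertex is seen at most `Δ` times, so
`2|Z| ≤ Δ (w(f) - |S|)`; with `|Z| = n - |S|` this is `Δ w(f) ≥ 2n + (Δ - 2)|S|`, which gives
the bound when `Δ ≥ 2`. When `Δ = 1` no vertex can lie outside a restrained dominating set,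
so `γ_r(G) = n ≤ w(f)`.
-/

namespace SimpleGraph

variable {V : Type*} [Fintype V] (G : SimpleGraph V) [DecidableRel G.Adj]

lemma one_lt_degree_of_adj_of_adj {v u w : V} (hu : G.Adj v u) (hw : G.Adj v w) (hne : u ≠ w) :
    1 < G.degree v := by
  rw [← card_neighborFinset_eq_degree]
  exact one_lt_card.2 ⟨u, by simpa, w, by simpa, hne⟩

lemma mul_card_le_maxDegree_mul_sum (g : V → ℕ) (Z : Finset V) (c : ℕ)
    (hZ : ∀ v ∈ Z, c ≤ ∑ u ∈ G.neighborFinset v, g u) :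
    c * #Z ≤ G.maxDegree * ∑ u, g u :=
  calc c * #Z = ∑ _v ∈ Z, c := by rw [sum_const, smul_eq_mul, mul_comm]
    _ ≤ ∑ v ∈ Z, ∑ u ∈ G.neighborFinset v, g u := sum_le_sum hZ
    _ ≤ ∑ v, ∑ u ∈ G.neighborFinset v, g u :=
        sum_le_sum_of_subset_of_nonneg (subset_univ Z) fun _ _ _ => Nat.zero_le _
    _ = ∑ u, ∑ _v ∈ G.neighborFinset u, g u :=
        sum_comm' fun v u => by simp [mem_neighborFinset, G.adj_comm]
    _ = ∑ u, G.degree u * g u := by simp [sum_const, card_neighborFinset_eq_degree]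
    _ ≤ ∑ u, G.maxDegree * g u :=
        sum_le_sum fun u _ => Nat.mul_le_mul_right _ (G.degree_le_maxDegree u)
    _ = G.maxDegree * ∑ u, g u := (mul_sum _ _ _).symm

end SimpleGraph

section RestrainedDomination

variable {V : Type*} [Fintype V] {G : SimpleGraph V}

lemma IsRDomSet.one_lt_degree_of_notMem [DecidableRel G.Adj] {S : Set V} (hS : IsRDomSet G S)
    {v : V} (hv : v ∉ S) : 1 < G.degree v := by
  obtain ⟨u, huS, hu⟩ := hS.1 v hv
  obtain ⟨w, hwS, hw⟩ := hS.2 v hv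
  exact G.one_lt_degree_of_adj_of_adj hu hw fun h => hwS (h ▸ huS)

lemma IsRDomSet.eq_univ_of_maxDegree_le_one [DecidableRel G.Adj] {S : Finset V}
    (hS : IsRDomSet G ↑S) (hΔ : G.maxDegree ≤ 1) : S = univ :=
  eq_univ_iff_forall.2 fun v => by
    by_contra hv
    have := hS.one_lt_degree_of_notMem (mem_coe.not.2 hv)
    have := G.degree_le_maxDegree v
    omega

lemma rDomNum_le_card {S : Finset V} (hS : IsRDomSet G ↑S) : rDomNum G ≤ #S :=
  Nat.sInf_le ⟨S, hS, rfl⟩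

variable (G) in
lemma exists_isRDomSet_card_eq_rDomNum : ∃ S : Finset V, IsRDomSet G ↑S ∧ #S = rDomNum G :=
  Nat.sInf_mem (s := {k | ∃ S : Finset V, IsRDomSet G ↑S ∧ #S = k})
    ⟨_, univ, ⟨fun _ hv => (hv (by simp)).elim, fun _ hv => (hv (by simp)).elim⟩, rfl⟩

variable (G) in
lemma rDomNum_eq_card_of_maxDegree_le_one [DecidableRel G.Adj] (hΔ : G.maxDegree ≤ 1) :
    rDomNum G = Fintype.card V := by
  obtain ⟨S, hS, hcard⟩ := exists_isRDomSet_card_eq_rDomNum G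
  rw [← hcard, hS.eq_univ_of_maxDegree_le_one hΔ, card_univ]

variable (G) in
lemma exists_isRDRD_sum_eq_rdrNum : ∃ f : V → ℕ, IsRDRD G f ∧ ∑ v, f v = rdrNum G :=
  Nat.sInf_mem (s := {k | ∃ f : V → ℕ, IsRDRD G f ∧ ∑ v, f v = k})
    ⟨_, fun _ => 2, ⟨fun _ => by norm_num, fun _ h => by simp at h, fun _ h => by simp at h,
      fun _ h => by simp at h⟩, rfl⟩

lemma IsRDRD.isRDomSet_support {f : V → ℕ} (hf : IsRDRD G f) :
    IsRDomSet G ↑({v | f v ≠ 0} : Finset V) := by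
  simp only [coe_filter, mem_univ, true_and]
  refine ⟨fun v hv => ?_, fun v hv => ?_⟩
  · rcases hf.2.1 v (not_not.1 hv) with ⟨u, hu, hfu⟩ | ⟨u, _, hu, _, _, hfu, _⟩ <;>
      exact ⟨u, by simp [hfu], hu⟩
  · obtain ⟨u, hu, hfu⟩ := hf.2.2.2 v (not_not.1 hv)
    exact ⟨u, by simp [hfu], hu⟩

lemma IsRDRD.two_le_sum_sub_one_of_eq_zero [DecidableRel G.Adj] {f : V → ℕ} (hf : IsRDRD G f)
    {v : V} (hv : f v = 0) : 2 ≤ ∑ u ∈ G.neighborFinset v, (f u - 1) := by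
  classical
  rcases hf.2.1 v hv with ⟨u, hu, hfu⟩ | ⟨u, w, hu, hw, hne, hfu, hfw⟩
  · calc 2 = f u - 1 := by omega
      _ ≤ _ := single_le_sum (f := (f · - 1)) (fun _ _ => Nat.zero_le _)
          ((G.mem_neighborFinset v u).2 hu)
  · have hsub : ({u, w} : Finset V) ⊆ G.neighborFinset v := by
      simp [insert_subset_iff, hu, hw]
    calc 2 = ∑ x ∈ ({u, w} : Finset V), (f x - 1) := by simp [sum_pair hne, hfu, hfw]
      _ ≤ _ := sum_le_sum_of_subset hsub

lemma sum_eq_sum_sub_one_add_card_ne_zero (f : V → ℕ) :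
    ∑ v, f v = ∑ v, (f v - 1) + #({v | f v ≠ 0} : Finset V) := by
  rw [card_filter, ← sum_add_distrib]
  refine sum_congr rfl fun v _ => ?_
  split_ifs <;> omega

-- `Δ w(f) ≥ 2n + (Δ - 2)|S|`, with `2|S|` moved across to avoid truncated subtraction.
lemma IsRDRD.two_mul_card_add_le [DecidableRel G.Adj] {f : V → ℕ} (hf : IsRDRD G f) :
    2 * Fintype.card V + G.maxDegree * #({v | f v ≠ 0} : Finset V)
      ≤ G.maxDegree * ∑ v, f v + 2 * #({v | f v ≠ 0} : Finset V) := by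
  have hcount := G.mul_card_le_maxDegree_mul_sum (f · - 1) {v | f v = 0} 2 fun v hv =>
    hf.two_le_sum_sub_one_of_eq_zero (mem_filter.1 hv).2
  have hpart : #({v | f v = 0} : Finset V) + #({v | f v ≠ 0} : Finset V) = Fintype.card V :=
    card_filter_add_card_filter_not _
  rw [sum_eq_sum_sub_one_add_card_ne_zero f, mul_add]
  omega

end RestrainedDomination

theorem stmt_2 {V : Type*} [Fintype V] (G : SimpleGraph V) [DecidableRel G.Adj]
    (hΔ : 1 ≤ G.maxDegree) :
    (2 * (Fintype.card V : ℝ) + ((G.maxDegree : ℝ) - 2) * (rDomNum G : ℝ)) / (G.maxDegree : ℝ)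
      ≤ (rdrNum G : ℝ) := by
  obtain ⟨f, hf, hw⟩ := exists_isRDRD_sum_eq_rdrNum G
  set S : Finset V := {v | f v ≠ 0}
  have hcount :
      (2 * Fintype.card V + G.maxDegree * #S : ℝ) ≤ G.maxDegree * rdrNum G + 2 * #S := by
    exact_mod_cast hw ▸ hf.two_mul_card_add_le
  rw [div_le_iff₀ (by exact_mod_cast hΔ)]
  rcases hΔ.lt_or_eq with hΔ2 | hΔ1
  · have hγ : (rDomNum G : ℝ) ≤ #S := by
      exact_mod_cast rDomNum_le_card hf.isRDomSet_support
    have hΔ2 : (2 : ℝ) ≤ G.maxDegree := by exact_mod_cast hΔ2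
    nlinarith
  · have hγ : (rDomNum G : ℝ) = Fintype.card V := by
      exact_mod_cast rDomNum_eq_card_of_maxDegree_le_one G hΔ1.ge
    have hS : (#S : ℝ) ≤ Fintype.card V := by exact_mod_cast card_le_univ S
    rw [← hΔ1] at hcount ⊢
    push_cast at hcount ⊢
    linarith
end

section
/- For any graph G of order n with no isolated vertices, γ_rdR(G) ≤ n + γ(G), where γ(G) is the domination number of G. -/
open Finset

/-
Take a minimum dominating set `S` and assign `2` to its vertices and `1` to all others. No vertex
gets `0`, so the conditions on `0`-vertices are vacuous, and every `1`-vertex has a neighbour in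
`S`, i.e. a neighbour of value `2`. The weight is `2 |S| + (n - |S|) = n + γ(G)`.
-/

theorem Finset.sum_ite_mem_two_one {V : Type*} [Fintype V] [DecidableEq V] (S : Finset V) :
    ∑ v, (if v ∈ S then 2 else 1) = Fintype.card V + S.card :=
  calc ∑ v, (if v ∈ S then 2 else 1) = ∑ v, (1 + if v ∈ S then 1 else 0) :=
        Finset.sum_congr rfl fun v _ => by split <;> rfl
    _ = Fintype.card V + S.card := by simp [Finset.sum_add_distrib]

section

variable {V : Type*}

theorem exists_isDomSet_card_eq_domNum [Fintype V] (G : SimpleGraph V) :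
    ∃ S : Finset V, IsDomSet G ↑S ∧ S.card = domNum G :=
  Nat.sInf_mem (s := {k | ∃ S : Finset V, IsDomSet G ↑S ∧ S.card = k})
    ⟨_, Finset.univ, fun v hv => absurd (Finset.mem_coe.2 (Finset.mem_univ v)) hv, rfl⟩

theorem rdrNum_le_sum [Fintype V] {G : SimpleGraph V} {f : V → ℕ} (hf : IsRDRD G f) :
    rdrNum G ≤ ∑ v, f v :=
  Nat.sInf_le ⟨f, hf, rfl⟩

theorem isRDRD_ite_of_isDomSet [DecidableEq V] {G : SimpleGraph V} {S : Finset V}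
    (hS : IsDomSet G ↑S) : IsRDRD G (fun v => if v ∈ S then 2 else 1) := by
  refine ⟨fun v => ?_, fun v hv => ?_, fun v hv => ?_, fun v hv => ?_⟩
  all_goals beta_reduce at *
  · split <;> omega
  · split at hv <;> omega
  · have hvS : v ∉ S := fun hvS => by simp [hvS] at hv
    obtain ⟨u, huS, hadj⟩ := hS v hvS
    exact ⟨u, hadj, by simp [Finset.mem_coe.1 huS]⟩
  · split at hv <;> omega

end

theorem stmt_3_general {V : Type*} [Fintype V] (G : SimpleGraph V) :
    rdrNum G ≤ Fintype.card V + domNum G := by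
  classical
  obtain ⟨S, hS, hcard⟩ := exists_isDomSet_card_eq_domNum G
  calc rdrNum G ≤ ∑ v, (if v ∈ S then 2 else 1) := rdrNum_le_sum (isRDRD_ite_of_isDomSet hS)
    _ = Fintype.card V + domNum G := by rw [Finset.sum_ite_mem_two_one, hcard]

theorem stmt_3 {V : Type*} [Fintype V] (G : SimpleGraph V)
    (h : ∀ v : V, ∃ u, G.Adj v u) :
    rdrNum G ≤ Fintype.card V + domNum G :=
  stmt_3_general G
end

section
/- Let G be a graph with no isolated vertices on n vertices v_1,…,v_n, and let H be obtained from G by attaching two new pendant vertices (leaves) to each vertex v_i. Then γ_rdR(H) = 4n. -/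
open Finset

/-- The graph obtained from `G` by attaching two new pendant vertices to each vertex. -/
def attachTwoLeaves {V : Type*} (G : SimpleGraph V) : SimpleGraph (V ⊕ V × Fin 2) :=
  SimpleGraph.fromRel (fun x y => match x, y with
    | Sum.inl a, Sum.inl b => G.Adj a b
    | Sum.inl a, Sum.inr p => p.1 = a
    | _, _ => False)

/-!
Giving every vertex of `G` the value 2 and every leaf the value 1 is a restrained double Roman
dominating function of weight `4n`. Conversely, a leaf cannot get the value 0, since its only
neighbour would have to be both 0 and 3; and a leaf with value 1 forces its neighbour to have
value at least 2. Hence each vertex of `G` together with its two leaves carries weight at least 4.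
-/

namespace IsRDRD

variable {V : Type*} {G : SimpleGraph V} {f : V → ℕ}

theorem pos_of_adj_imp_eq (hf : IsRDRD G f) {v c : V} (hv : ∀ u, G.Adj v u → u = c) :
    0 < f v := by
  obtain ⟨-, hdom, -, hres⟩ := hf
  by_contra! hzero
  have hv0 : f v = 0 := by omega
  obtain ⟨u, hu, hu0⟩ := hres v hv0
  obtain rfl := hv u hu
  rcases hdom v hv0 with ⟨u', hu', hu'3⟩ | ⟨u₁, u₂, hu₁, hu₂, hne, -, -⟩
  · obtain rfl := hv u' hu'
    omega
  · exact hne ((hv u₁ hu₁).trans (hv u₂ hu₂).symm)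

theorem two_le_or_two_le_of_adj_imp_eq (hf : IsRDRD G f) {v c : V}
    (hv : ∀ u, G.Adj v u → u = c) : 2 ≤ f v ∨ 2 ≤ f c := by
  have hpos := hf.pos_of_adj_imp_eq hv
  by_cases hv1 : f v = 1
  · obtain ⟨u, hu, hu2⟩ := hf.2.2.1 v hv1
    obtain rfl := hv u hu
    exact Or.inr hu2
  · omega

theorem four_le_add_of_two_leaves (hf : IsRDRD G f) {c l₁ l₂ : V}
    (h₁ : ∀ u, G.Adj l₁ u → u = c) (h₂ : ∀ u, G.Adj l₂ u → u = c) :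
    4 ≤ f c + (f l₁ + f l₂) := by
  have := hf.pos_of_adj_imp_eq h₁
  have := hf.pos_of_adj_imp_eq h₂
  have := hf.two_le_or_two_le_of_adj_imp_eq h₁
  have := hf.two_le_or_two_le_of_adj_imp_eq h₂
  omega

end IsRDRD

section attachTwoLeaves

variable {V : Type*} (G : SimpleGraph V)

theorem attachTwoLeaves_adj_inr_iff (p : V × Fin 2) (u : V ⊕ V × Fin 2) :
    (attachTwoLeaves G).Adj (Sum.inr p) u ↔ u = Sum.inl p.1 := by
  constructor
  · rintro ⟨-, h | h⟩ <;> cases u <;> simp_all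
  · rintro rfl
    exact ⟨by simp, Or.inr rfl⟩

theorem isRDRD_attachTwoLeaves_elim :
    IsRDRD (attachTwoLeaves G) (Sum.elim (fun _ => 2) (fun _ => 1)) := by
  refine ⟨?_, ?_, ?_, ?_⟩
  · rintro (v | p) <;> simp
  · rintro (v | p) hv <;> simp at hv
  · rintro (v | p) hv
    · simp at hv
    · exact ⟨Sum.inl p.1, (attachTwoLeaves_adj_inr_iff G p _).mpr rfl, by simp⟩
  · rintro (v | p) hv <;> simp at hv

variable [Fintype V]

theorem sum_elim_two_one_eq_four_mul_card :
    ∑ x : V ⊕ V × Fin 2, Sum.elim (fun _ => 2) (fun _ => 1) x = 4 * Fintype.card V := by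
  simp only [Fintype.sum_sum_type, Sum.elim_inl, Sum.elim_inr, sum_const, card_univ,
    Fintype.card_prod, Fintype.card_fin, smul_eq_mul]
  ring

theorem four_mul_card_le_sum_of_isRDRD {f : V ⊕ V × Fin 2 → ℕ}
    (hf : IsRDRD (attachTwoLeaves G) f) : 4 * Fintype.card V ≤ ∑ x, f x :=
  calc 4 * Fintype.card V = ∑ _v : V, 4 := by simp [mul_comm]
    _ ≤ ∑ v : V, (f (Sum.inl v) + (f (Sum.inr (v, 0)) + f (Sum.inr (v, 1)))) :=
        sum_le_sum fun v _ => hf.four_le_add_of_two_leaves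
          (fun u => (attachTwoLeaves_adj_inr_iff G (v, 0) u).mp)
          (fun u => (attachTwoLeaves_adj_inr_iff G (v, 1) u).mp)
    _ = ∑ x, f x := by
        rw [Fintype.sum_sum_type, sum_add_distrib, Fintype.sum_prod_type]
        simp [Fin.sum_univ_two]

end attachTwoLeaves

theorem stmt_4_general {V : Type*} [Fintype V] (G : SimpleGraph V) :
    rdrNum (attachTwoLeaves G) = 4 * Fintype.card V := by
  have hmem : 4 * Fintype.card V ∈
      {k | ∃ f : V ⊕ V × Fin 2 → ℕ, IsRDRD (attachTwoLeaves G) f ∧ ∑ v, f v = k} :=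
    ⟨_, isRDRD_attachTwoLeaves_elim G, sum_elim_two_one_eq_four_mul_card⟩
  refine le_antisymm (Nat.sInf_le hmem) (le_csInf ⟨_, hmem⟩ ?_)
  rintro k ⟨f, hf, rfl⟩
  exact four_mul_card_le_sum_of_isRDRD G hf

theorem stmt_4 {V : Type*} [Fintype V] (G : SimpleGraph V)
    (h : ∀ v : V, ∃ u, G.Adj v u) :
    rdrNum (attachTwoLeaves G) = 4 * Fintype.card V :=
  stmt_4_general G
end

section
/- Let r ≥ 3 be an integer and let G be an r-regular graph of order n with girth at least 6. Then γ_rdR(G) ≤ 2(n − r²) + 1. -/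
open Finset

/-!
Label a vertex `v` with 3, the vertices at distance 1 or 2 from `v` with 0 and all other vertices
with 2. Since the girth is at least 6, the ball of radius 2 around `v` is a tree, so it has
`1 + r + r (r - 1) = r² + 1` vertices, and a vertex at distance 2 from `v` has `r - 1 ≥ 2`
neighbours outside the ball, all labelled 2. This labelling is restrained double Roman dominating
and has weight `3 + 2 (n - r² - 1)`.
-/

namespace SimpleGraph

variable {V : Type*} {G : SimpleGraph V} {a b c d e : V}

lemma no_triangle_of_four_le_egirth (hg : 4 ≤ G.egirth)
    (hab : G.Adj a b) (hbc : G.Adj b c) (hca : G.Adj c a) : False := by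
  have hcyc : (Walk.cons hab (Walk.cons hbc (Walk.cons hca Walk.nil))).IsCycle := by
    simp [Walk.cons_isCycle_iff, Walk.cons_isPath_iff, hab.ne, hbc.ne, hca.ne, hab.ne', hca.ne']
  exact absurd (hg.trans (egirth_le_length hcyc)) (by norm_num)

lemma no_square_of_five_le_egirth (hg : 5 ≤ G.egirth)
    (hab : G.Adj a b) (hbc : G.Adj b c) (hcd : G.Adj c d) (hda : G.Adj d a)
    (hac : a ≠ c) (hbd : b ≠ d) : False := by
  have hcyc : (Walk.cons hab (Walk.cons hbc (Walk.cons hcd (Walk.cons hda Walk.nil)))).IsCycle := by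
    simp [Walk.cons_isCycle_iff, Walk.cons_isPath_iff, hab.ne, hbc.ne, hcd.ne, hda.ne, hab.ne',
      hda.ne', hac, hbd, hac.symm]
  exact absurd (hg.trans (egirth_le_length hcyc)) (by norm_num)

lemma no_pentagon_of_six_le_egirth (hg : 6 ≤ G.egirth)
    (hab : G.Adj a b) (hbc : G.Adj b c) (hcd : G.Adj c d) (hde : G.Adj d e) (hea : G.Adj e a)
    (hac : a ≠ c) (had : a ≠ d) (hbd : b ≠ d) (hbe : b ≠ e) (hce : c ≠ e) : False := by
  have hcyc : (Walk.cons hab (Walk.cons hbc (Walk.cons hcd (Walk.cons hde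
      (Walk.cons hea Walk.nil))))).IsCycle := by
    simp [Walk.cons_isCycle_iff, Walk.cons_isPath_iff, hab.ne, hbc.ne, hcd.ne, hde.ne, hea.ne,
      hab.ne', hea.ne', hac, had, hbd, hbe, hce, hac.symm, had.symm]
  exact absurd (hg.trans (egirth_le_length hcyc)) (by norm_num)

variable [Fintype V] [DecidableEq V] [DecidableRel G.Adj]

variable (G) in
def puncturedBallTwo (v : V) : Finset V :=
  {x | x ≠ v ∧ (G.Adj v x ∨ ∃ u, G.Adj v u ∧ G.Adj u x)}

variable (G) in
def ballLabeling (v x : V) : ℕ :=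
  if x = v then 3 else if x ∈ G.puncturedBallTwo v then 0 else 2

lemma mem_puncturedBallTwo {v x : V} :
    x ∈ G.puncturedBallTwo v ↔ x ≠ v ∧ (G.Adj v x ∨ ∃ u, G.Adj v u ∧ G.Adj u x) := by
  simp [puncturedBallTwo]

lemma mem_puncturedBallTwo_of_adj {v x : V} (h : G.Adj v x) : x ∈ G.puncturedBallTwo v :=
  mem_puncturedBallTwo.2 ⟨h.ne', .inl h⟩

lemma mem_puncturedBallTwo_of_adj_adj {v u x : V} (hvu : G.Adj v u) (hux : G.Adj u x)
    (hxv : x ≠ v) : x ∈ G.puncturedBallTwo v :=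
  mem_puncturedBallTwo.2 ⟨hxv, .inr ⟨u, hvu, hux⟩⟩

lemma sum_ballLabeling_add_two_mul_card (v : V) :
    ∑ x, G.ballLabeling v x + 2 * #(G.puncturedBallTwo v) = 2 * Fintype.card V + 1 := by
  have hv : v ∉ G.puncturedBallTwo v := by simp [mem_puncturedBallTwo]
  calc ∑ x, G.ballLabeling v x + 2 * #(G.puncturedBallTwo v)
      = ∑ x, (G.ballLabeling v x + if x ∈ G.puncturedBallTwo v then 2 else 0) := by
        rw [sum_add_distrib, sum_ite_mem, univ_inter, sum_const, smul_eq_mul, mul_comm]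
    _ = ∑ x, (2 + if x = v then 1 else 0) := by
        refine sum_congr rfl fun x _ => ?_
        unfold ballLabeling
        by_cases hxv : x = v
        · subst hxv; simp [hv]
        · by_cases hx : x ∈ G.puncturedBallTwo v <;> simp [hxv, hx]
    _ = 2 * Fintype.card V + 1 := by simp [sum_add_distrib, mul_comm]

/-- A neighbour `w ≠ u` of `x` inside the ball would close a cycle of length 3, 4 or 5. -/
lemma ballLabeling_eq_two_of_adj (hg : 6 ≤ G.egirth) {v u x w : V} (hvu : G.Adj v u)
    (hux : G.Adj u x) (hvx : ¬ G.Adj v x) (hxv : x ≠ v) (hxw : G.Adj x w) (hwu : w ≠ u) :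
    G.ballLabeling v w = 2 := by
  have hwv : w ≠ v := by rintro rfl; exact hvx hxw.symm
  have hw : w ∉ G.puncturedBallTwo v := by
    rw [mem_puncturedBallTwo]
    rintro ⟨-, hvw | ⟨u', hvu', hu'w⟩⟩
    · exact no_square_of_five_le_egirth (hg.trans' (by norm_num)) hvu hux hxw hvw.symm hxv.symm
        hwu.symm
    · obtain rfl | hu' := eq_or_ne u' u
      · exact no_triangle_of_four_le_egirth (hg.trans' (by norm_num)) hux hxw hu'w.symm
      · refine no_pentagon_of_six_le_egirth hg hvu hux hxw hu'w.symm hvu'.symm hxv.symm hwv.symm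
          hwu.symm hu'.symm ?_
        rintro rfl; exact hvx hvu'
  simp [ballLabeling, hwv, hw]

lemma isRDRD_ballLabeling (hdeg : ∀ x, 3 ≤ G.degree x) (hg : 6 ≤ G.egirth) (v : V) :
    IsRDRD G (G.ballLabeling v) := by
  have hzero {x} : G.ballLabeling v x = 0 ↔ x ∈ G.puncturedBallTwo v := by
    unfold ballLabeling; split_ifs <;> simp_all [mem_puncturedBallTwo]
  refine ⟨fun x => by unfold ballLabeling; split_ifs <;> omega, fun x hx => ?_,
    fun x hx => by unfold ballLabeling at hx; split_ifs at hx <;> omega, fun x hx => ?_⟩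
  · obtain ⟨hxv, hvx | ⟨u, hvu, hux⟩⟩ := mem_puncturedBallTwo.1 (hzero.1 hx)
    · exact .inl ⟨v, hvx.symm, if_pos rfl⟩
    by_cases hvx : G.Adj v x
    · exact .inl ⟨v, hvx.symm, if_pos rfl⟩
    have : 1 < #((G.neighborFinset x).erase u) := by
      rw [card_erase_of_mem (by simpa using hux.symm), card_neighborFinset_eq_degree]
      have := hdeg x; omega
    obtain ⟨w₁, hw₁, w₂, hw₂, hne⟩ := one_lt_card.1 this
    simp only [mem_erase, mem_neighborFinset] at hw₁ hw₂
    exact .inr ⟨w₁, w₂, hw₁.2, hw₂.2, hne,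
      ballLabeling_eq_two_of_adj hg hvu hux hvx hxv hw₁.2 hw₁.1,
      ballLabeling_eq_two_of_adj hg hvu hux hvx hxv hw₂.2 hw₂.1⟩
  · obtain ⟨hxv, hvx | ⟨u, hvu, hux⟩⟩ := mem_puncturedBallTwo.1 (hzero.1 hx)
    · have : 1 < #(G.neighborFinset x) := by
        rw [card_neighborFinset_eq_degree]; have := hdeg x; omega
      obtain ⟨y, hy, hyv⟩ := exists_mem_ne this v
      rw [mem_neighborFinset] at hy
      exact ⟨y, hy, hzero.2 (mem_puncturedBallTwo_of_adj_adj hvx hy hyv)⟩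
    · exact ⟨u, hux.symm, hzero.2 (mem_puncturedBallTwo_of_adj hvu)⟩

/-- The sets `insert u ((G.neighborFinset u).erase v)`, `u ∈ N(v)`, have `G.degree u` elements
and are pairwise disjoint because there are no triangles and no 4-cycles. -/
lemma sq_le_card_puncturedBallTwo {δ : ℕ} (hdeg : ∀ x, δ ≤ G.degree x) (hg : 5 ≤ G.egirth)
    (v : V) : δ ^ 2 ≤ #(G.puncturedBallTwo v) := by
  set S : V → Finset V := fun u => insert u ((G.neighborFinset u).erase v)
  have hS : ∀ u ∈ G.neighborFinset v, #(S u) = G.degree u := by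
    intro u hu
    rw [mem_neighborFinset] at hu
    rw [card_insert_of_notMem (by simp), card_erase_of_mem (by simpa using hu.symm),
      card_neighborFinset_eq_degree]
    have := G.degree_pos_iff_exists_adj u |>.2 ⟨v, hu.symm⟩
    omega
  have hdisj : (G.neighborFinset v : Set V).PairwiseDisjoint S := by
    intro u₁ hu₁ u₂ hu₂ hne
    simp only [coe_neighborFinset, mem_neighborSet] at hu₁ hu₂
    rw [Function.onFun, Finset.disjoint_left]
    simp only [S, mem_insert, mem_erase, mem_neighborFinset]
    have h4 : 4 ≤ G.egirth := hg.trans' (by norm_num)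
    rintro y (rfl | ⟨hyv, hu₁y⟩) (rfl | ⟨-, hu₂y⟩)
    · exact hne rfl
    · exact no_triangle_of_four_le_egirth h4 hu₁ hu₂y.symm hu₂.symm
    · exact no_triangle_of_four_le_egirth h4 hu₂ hu₁y.symm hu₁.symm
    · exact no_square_of_five_le_egirth hg hu₁ hu₁y hu₂y.symm hu₂.symm hyv.symm hne
  have hsub : (G.neighborFinset v).biUnion S ⊆ G.puncturedBallTwo v := by
    simp only [subset_iff, mem_biUnion, mem_neighborFinset, S, mem_insert, mem_erase]
    rintro x ⟨u, hvu, rfl | ⟨hxv, hux⟩⟩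
    exacts [mem_puncturedBallTwo_of_adj hvu, mem_puncturedBallTwo_of_adj_adj hvu hux hxv]
  calc δ ^ 2 ≤ #(G.neighborFinset v) * δ := by
        rw [sq, card_neighborFinset_eq_degree]; exact Nat.mul_le_mul_right _ (hdeg v)
    _ ≤ ∑ u ∈ G.neighborFinset v, #(S u) := by
        rw [← smul_eq_mul]
        exact card_nsmul_le_sum _ _ _ fun u hu => (hS u hu).symm ▸ hdeg u
    _ = #((G.neighborFinset v).biUnion S) := (card_biUnion hdisj).symm
    _ ≤ #(G.puncturedBallTwo v) := card_le_card hsub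

end SimpleGraph

theorem stmt_5 {V : Type*} [Fintype V] (G : SimpleGraph V) [DecidableRel G.Adj]
    (r : ℕ) (hr : 3 ≤ r) (hreg : G.IsRegularOfDegree r) (hg : 6 ≤ G.girth) :
    (rdrNum G : ℤ) ≤ 2 * ((Fintype.card V : ℤ) - (r : ℤ) ^ 2) + 1 := by
  classical
  have hcyc : ¬ G.IsAcyclic := by rw [← G.girth_eq_zero]; omega
  have hg' : 6 ≤ G.egirth := by
    rw [← ENat.natCast_toNat (G.egirth_eq_top.not.2 hcyc)]; exact_mod_cast hg
  obtain ⟨v, -⟩ := G.exists_egirth_eq_length.2 hcyc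
  have hrdrd := G.isRDRD_ballLabeling (fun x => hreg x ▸ hr) hg' v
  have hweight : rdrNum G ≤ ∑ x, G.ballLabeling v x := Nat.sInf_le ⟨_, hrdrd, rfl⟩
  have hsum := G.sum_ballLabeling_add_two_mul_card v
  have hcard := G.sq_le_card_puncturedBallTwo (fun x => (hreg x).ge) (hg'.trans' (by norm_num)) v
  zify at hweight hsum hcard
  linarith
end

section
/- For an even integer n ≥ 6, the cocktail-party graph H_n obtained from the complete graph K_n by deleting a perfect matching satisfies γ_rdR(H_n) = 4. -/
open Finset

/-- The cocktail-party graph `K_{2m}` minus a perfect matching, on vertex set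
`Fin m × Fin 2`: two vertices are adjacent iff they differ in the first coordinate. -/
def cocktailParty (m : ℕ) : SimpleGraph (Fin m × Fin 2) :=
  SimpleGraph.fromRel (fun a b => a.1 ≠ b.1)

/-!
Weight `2` on both vertices of one matching pair dominates every other vertex twice, and
`m ≥ 3` leaves each remaining vertex a neighbour outside that pair, so the weight is at most `4`.
Conversely, without `0`-vertices the weight is at least `2m ≥ 6`. A `0`-vertex needs two `2`s
(weight `4`) or a `3`; a vertex of weight `3` does not dominate its matching partner, which then
carries weight itself or needs a second `3` or two `2`s of its own.
-/

lemma Finset.add_le_sum_univ {V : Type*} [Fintype V] (f : V → ℕ) {a b : V} (hab : a ≠ b) :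
    f a + f b ≤ ∑ v, f v := by
  classical
  rw [← Finset.sum_pair hab]
  exact Finset.sum_le_sum_of_subset (Finset.subset_univ _)

namespace IsRDRD

variable {V : Type*} [Fintype V] {G : SimpleGraph V} {f : V → ℕ}

/-- Either `w` carries weight itself or, being a `0`-vertex, it needs a second `3` (it is not
dominated by `u`) or two `2`s. -/
lemma four_le_sum_of_three_of_not_adj (hf : IsRDRD G f) {u w : V} (hu : f u = 3)
    (hwu : w ≠ u) (hnadj : ¬G.Adj w u) : 4 ≤ ∑ v, f v := by
  by_cases hw : f w = 0
  · rcases hf.2.1 w hw with ⟨u', hadj, hu'⟩ | ⟨a, b, -, -, hab, ha, hb⟩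
    · have hne : u ≠ u' := by rintro rfl; exact hnadj hadj
      have := Finset.add_le_sum_univ f hne
      omega
    · have := Finset.add_le_sum_univ f hab
      omega
  · have := Finset.add_le_sum_univ f hwu.symm
    omega

lemma four_le_sum (hf : IsRDRD G f) (hcard : 4 ≤ Fintype.card V)
    (hnonadj : ∀ u, ∃ w, w ≠ u ∧ ¬G.Adj w u) : 4 ≤ ∑ v, f v := by
  by_cases hzero : ∃ v, f v = 0
  · obtain ⟨v, hv⟩ := hzero
    rcases hf.2.1 v hv with ⟨u, -, hu⟩ | ⟨a, b, -, -, hab, ha, hb⟩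
    · obtain ⟨w, hwu, hnadj⟩ := hnonadj u
      exact hf.four_le_sum_of_three_of_not_adj hu hwu hnadj
    · have := Finset.add_le_sum_univ f hab
      omega
  · push Not at hzero
    calc 4 ≤ Fintype.card V := hcard
      _ = ∑ _v : V, 1 := by simp
      _ ≤ ∑ v, f v := Finset.sum_le_sum fun v _ => Nat.one_le_iff_ne_zero.2 (hzero v)

end IsRDRD

lemma isRDRD_two_on_pair {V : Type*} [DecidableEq V] {G : SimpleGraph V} {a b : V}
    (hab : a ≠ b) (hdom : ∀ v, v ≠ a → v ≠ b → G.Adj v a ∧ G.Adj v b)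
    (hrest : ∀ v, v ≠ a → v ≠ b → ∃ u, u ≠ a ∧ u ≠ b ∧ G.Adj v u) :
    IsRDRD G (fun v => if v ∈ ({a, b} : Finset V) then 2 else 0) := by
  have hout : ∀ v, (if v ∈ ({a, b} : Finset V) then 2 else 0) = 0 → v ≠ a ∧ v ≠ b := by
    intro v hv
    have hv' : v ∉ ({a, b} : Finset V) := fun h => by simp [h] at hv
    simpa only [Finset.mem_insert, Finset.mem_singleton, not_or] using hv'
  refine ⟨fun v => ?_, fun v hv => ?_, fun v hv => ?_, fun v hv => ?_⟩
  · dsimp only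
    split_ifs <;> omega
  · obtain ⟨hva, hvb⟩ := hout v hv
    exact Or.inr ⟨a, b, (hdom v hva hvb).1, (hdom v hva hvb).2, hab, by simp, by simp⟩
  · dsimp only at hv
    split_ifs at hv
    omega
  · obtain ⟨hva, hvb⟩ := hout v hv
    obtain ⟨u, hua, hub, hadj⟩ := hrest v hva hvb
    exact ⟨u, hadj, by simp [hua, hub]⟩

lemma sum_two_on_pair {V : Type*} [Fintype V] [DecidableEq V] {a b : V} (hab : a ≠ b) :
    ∑ v, (if v ∈ ({a, b} : Finset V) then 2 else 0) = 4 := by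
  rw [Finset.sum_ite_mem, Finset.univ_inter, Finset.sum_const, Finset.card_pair hab]
  rfl

lemma rdrNum_eq_of_isLeast {V : Type*} [Fintype V] {G : SimpleGraph V} {k : ℕ}
    (hf : ∃ f, IsRDRD G f ∧ ∑ v, f v = k) (hle : ∀ f, IsRDRD G f → k ≤ ∑ v, f v) :
    rdrNum G = k :=
  IsLeast.csInf_eq ⟨hf, by rintro _ ⟨f, hf, rfl⟩; exact hle f hf⟩

lemma cocktailParty_adj {m : ℕ} {a b : Fin m × Fin 2} :
    (cocktailParty m).Adj a b ↔ a.1 ≠ b.1 := by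
  simp only [cocktailParty, SimpleGraph.fromRel_adj]
  constructor
  · rintro ⟨-, h | h⟩
    · exact h
    · exact h.symm
  · intro h
    exact ⟨fun e => h (congrArg Prod.fst e), Or.inl h⟩

lemma cocktailParty_exists_ne_not_adj {m : ℕ} (u : Fin m × Fin 2) :
    ∃ w, w ≠ u ∧ ¬(cocktailParty m).Adj w u := by
  have hflip : ∀ k : Fin 2, k + 1 ≠ k := by decide
  exact ⟨(u.1, u.2 + 1), fun h => hflip u.2 (congrArg Prod.snd h), by simp [cocktailParty_adj]⟩

lemma fst_ne_of_ne_of_ne {m : ℕ} {i : Fin m} {v : Fin m × Fin 2}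
    (h0 : v ≠ (i, 0)) (h1 : v ≠ (i, 1)) : v.1 ≠ i := by
  obtain ⟨j, k⟩ := v
  rintro rfl
  fin_cases k <;> simp_all

lemma exists_isRDRD_cocktailParty_sum_eq_four {m : ℕ} (hm : 3 ≤ m) :
    ∃ f, IsRDRD (cocktailParty m) f ∧ ∑ v, f v = 4 := by
  classical
  let i : Fin m := ⟨0, by omega⟩
  have hne : ((i, 0) : Fin m × Fin 2) ≠ (i, 1) := by simp
  refine ⟨_, isRDRD_two_on_pair hne (fun v h0 h1 => ?_) (fun v h0 h1 => ?_), sum_two_on_pair hne⟩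
  · have hv := fst_ne_of_ne_of_ne h0 h1
    exact ⟨cocktailParty_adj.2 hv, cocktailParty_adj.2 hv⟩
  · have hcard : ({i, v.1} : Finset (Fin m)).card < (Finset.univ : Finset (Fin m)).card := by
      calc ({i, v.1} : Finset (Fin m)).card ≤ 2 := Finset.card_le_two
        _ < _ := by simp only [Finset.card_univ, Fintype.card_fin]; omega
    obtain ⟨j, -, hj⟩ := Finset.exists_mem_notMem_of_card_lt_card hcard
    simp only [Finset.mem_insert, Finset.mem_singleton, not_or] at hj
    exact ⟨(j, 0), by simp [hj.1], by simp [hj.1], cocktailParty_adj.2 (Ne.symm hj.2)⟩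

theorem stmt_10 (m : ℕ) (hm : 3 ≤ m) : rdrNum (cocktailParty m) = 4 :=
  rdrNum_eq_of_isLeast (exists_isRDRD_cocktailParty_sum_eq_four hm) fun _ hf =>
    hf.four_le_sum (by simp only [Fintype.card_prod, Fintype.card_fin]; omega)
      cocktailParty_exists_ne_not_adj
end

section
/- For p ≥ 3, the Cartesian product of two complete graphs K_p □ K_p (the rook's graph) satisfies γ_rdR(K_p □ K_p) = 2p. -/
open Finset

theorem rdrNum_eq_of_forall_le {V : Type*} [Fintype V] {G : SimpleGraph V} {f : V → ℕ}
    (hf : IsRDRD G f) (hmin : ∀ g, IsRDRD G g → ∑ v, f v ≤ ∑ v, g v) :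
    rdrNum G = ∑ v, f v :=
  le_antisymm (Nat.sInf_le ⟨f, hf, rfl⟩)
    (le_csInf ⟨_, f, hf, rfl⟩ (by rintro _ ⟨g, hg, rfl⟩; exact hmin g hg))

theorem IsRDRD.exists_adj_two_le {V : Type*} {G : SimpleGraph V} {f : V → ℕ} (hf : IsRDRD G f)
    {v : V} (hv : f v ≤ 1) : ∃ u, G.Adj v u ∧ 2 ≤ f u := by
  obtain h0 | h1 : f v = 0 ∨ f v = 1 := by omega
  · rcases hf.2.1 v h0 with ⟨u, hu, hfu⟩ | ⟨u, -, hu, -, -, hfu, -⟩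
    · exact ⟨u, hu, by omega⟩
    · exact ⟨u, hu, by omega⟩
  · exact hf.2.2.1 v h1

namespace SimpleGraph

section RookGraph

variable {α β : Type*} [Fintype α] [Fintype β]

/-- If some row has weight at most 1, each vertex of that row must find its heavy neighbour
in its own column. -/
theorem rows_or_cols_two_le_sum (f : α × β → ℕ)
    (hf : ∀ v, f v ≤ 1 → ∃ u, ((⊤ : SimpleGraph α) □ (⊤ : SimpleGraph β)).Adj v u ∧ 2 ≤ f u) :
    (∀ x, 2 ≤ ∑ y, f (x, y)) ∨ (∀ y, 2 ≤ ∑ x, f (x, y)) := by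
  refine or_iff_not_imp_left.2 fun hrow y => ?_
  push Not at hrow
  obtain ⟨x₀, hx₀⟩ := hrow
  have hrow_le (y : β) : f (x₀, y) ≤ 1 :=
    (single_le_sum (f := fun y => f (x₀, y)) (fun _ _ => Nat.zero_le _) (mem_univ y)).trans
      (by omega)
  obtain ⟨⟨x, y'⟩, hadj, hfu⟩ := hf _ (hrow_le y)
  simp only [boxProd_adj, top_adj] at hadj
  rcases hadj with ⟨-, rfl⟩ | ⟨-, rfl⟩
  · exact hfu.trans
      (single_le_sum (f := fun x => f (x, y)) (fun _ _ => Nat.zero_le _) (mem_univ x))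
  · exact absurd (hrow_le y') (by omega)

theorem two_mul_min_card_le_sum (f : α × β → ℕ)
    (hf : ∀ v, f v ≤ 1 → ∃ u, ((⊤ : SimpleGraph α) □ (⊤ : SimpleGraph β)).Adj v u ∧ 2 ≤ f u) :
    2 * min (Fintype.card α) (Fintype.card β) ≤ ∑ v, f v := by
  rcases rows_or_cols_two_le_sum f hf with hrows | hcols
  · calc 2 * min (Fintype.card α) (Fintype.card β) ≤ ∑ _x : α, 2 := by simp [mul_comm]
      _ ≤ ∑ x, ∑ y, f (x, y) := sum_le_sum fun x _ => hrows x
      _ = ∑ v, f v := (Fintype.sum_prod_type _).symm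
  · calc 2 * min (Fintype.card α) (Fintype.card β) ≤ ∑ _y : β, 2 := by simp [mul_comm]
      _ ≤ ∑ y, ∑ x, f (x, y) := sum_le_sum fun y _ => hcols y
      _ = ∑ v, f v := (Fintype.sum_prod_type_right _).symm

variable [DecidableEq α]

def twoOnDiag (v : α × α) : ℕ := if v.1 = v.2 then 2 else 0

theorem sum_twoOnDiag : ∑ v : α × α, twoOnDiag v = 2 * Fintype.card α := by
  simp [twoOnDiag, Fintype.sum_prod_type, mul_comm]

/-- A non-diagonal vertex `(x, y)` sees the two diagonal vertices `(x, x)` and `(y, y)`, and a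
third value `z` gives it the non-diagonal neighbour `(x, z)`. -/
theorem isRDRD_twoOnDiag (h : 3 ≤ Fintype.card α) :
    IsRDRD ((⊤ : SimpleGraph α) □ (⊤ : SimpleGraph α)) twoOnDiag := by
  refine ⟨fun v => by unfold twoOnDiag; split <;> omega, ?_, ?_, ?_⟩
  · rintro ⟨x, y⟩ hv
    have hxy : x ≠ y := by rintro rfl; simp [twoOnDiag] at hv
    exact Or.inr ⟨(x, x), (y, y), by simp [hxy.symm], by simp [hxy], by simp [hxy],
      by simp [twoOnDiag], by simp [twoOnDiag]⟩
  · rintro ⟨x, y⟩ hv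
    unfold twoOnDiag at hv
    split at hv <;> omega
  · rintro ⟨x, y⟩ hv
    obtain ⟨z, hzx, hzy⟩ :=
      ENat.exists_ne_ne_of_three_le (by simpa [ENat.card_eq_coe_fintype_card] using h) x y
    exact ⟨(x, z), by simp [Ne.symm hzy], by simp [twoOnDiag, Ne.symm hzx]⟩

end RookGraph

end SimpleGraph

theorem stmt_11 (p : ℕ) (hp : 3 ≤ p) :
    rdrNum ((⊤ : SimpleGraph (Fin p)) □ (⊤ : SimpleGraph (Fin p))) = 2 * p := by
  have hcard : 3 ≤ Fintype.card (Fin p) := by simpa using hp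
  rw [rdrNum_eq_of_forall_le (SimpleGraph.isRDRD_twoOnDiag hcard) fun g hg => ?_,
    SimpleGraph.sum_twoOnDiag, Fintype.card_fin]
  simpa [SimpleGraph.sum_twoOnDiag] using
    SimpleGraph.two_mul_min_card_le_sum g fun v hv => hg.exists_adj_two_le hv
end

section
/- If T is a tree of order n ≥ 2 that is not a star K_{1,n−1}, then γ_rdR(T) ≥ n + 2. -/
open Finset

/-!
Write `nᵢ` for the number of vertices of value `i`. The weight of `f` is `n₁ + 2 n₂ + 3 n₃`, so
the claim is `n₀ + 2 ≤ n₂ + 2 n₃`. If no vertex has value `0` and this fails, a single vertex has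
value `2`, all others have value `1` and are adjacent to it, and the tree is a star.

Otherwise root the tree at a vertex of value `0`. The edges of the four types `0-0`, `0-3`,
`0-2` and `1-(≥2)` are distinct edges of the tree, so there are at most `n - 1` of them, and
those of type `0-0` or `0-3` form a forest on the vertices of values `0` and `3`, so there are
at most `n₀ + n₃ - 1` of these. Double counting vertex-edge incidences gives
`n₀ ≤ 2 e₀₀` (every `0`-vertex has a `0`-neighbour), `a ≤ e₀₃` for the `a` zeros with a
`3`-neighbour, `2 b ≤ e₀₂` for the `b` other zeros (each has two `2`-neighbours) and `n₁ ≤ e₁`.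
Adding these inequalities gives the claim.
-/

open SimpleGraph

section ParentMap

variable {V : Type*} {G : SimpleGraph V} {r : V} {p : V → V}

structure IsParentMap (G : SimpleGraph V) (r : V) (p : V → V) : Prop where
  map_root : p r = r
  eq_or_eq_of_adj : ∀ ⦃u v⦄, G.Adj u v → p v = u ∨ p u = v

theorem SimpleGraph.IsTree.exists_isParentMap (hT : G.IsTree) (r : V) :
    ∃ p : V → V, IsParentMap G r p := by
  choose W hW _ using hT.existsUnique_path r
  refine ⟨fun v => (W v).penultimate, ?_, fun u v huv => ?_⟩
  · rw [(hT.existsUnique_path r r).unique (hW r) Walk.IsPath.nil]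
    rfl
  by_cases hu : u ∈ (W v).support
  · exact Or.inl (hT.isAcyclic.eq_penultimate_of_adj_end (hW v) huv.symm hu).symm
  · exact Or.inr (hT.isAcyclic.eq_penultimate_of_adj_end (hW u) huv
      (hT.isAcyclic.mem_support_of_ne_mem_support_of_adj_of_isPath (hW u) (hW v) huv hu)).symm

variable [DecidableEq V]

theorem card_endpoints_le_two (S : Finset V) (v : V) : #{s ∈ S | s = v ∨ s = p v} ≤ 2 :=
  calc #{s ∈ S | s = v ∨ s = p v} ≤ #{v, p v} :=
        card_le_card fun s hs => by simp only [mem_filter] at hs; simp [hs.2]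
    _ ≤ 2 := card_le_two

variable [Fintype V]

/-- The edges `{v, p v}`, `v ≠ r`, of a tree rooted at `r` whose endpoints are related by `R` in
either order, each encoded by its endpoint `v` farther from the root. -/
def childrenBy (p : V → V) (r : V) (R : V → V → Prop) [DecidableRel R] : Finset V :=
  {v | v ≠ r ∧ (R v (p v) ∨ R (p v) v)}

variable {R : V → V → Prop} [DecidableRel R]

namespace IsParentMap

theorem card_adj_le_card_childrenBy [DecidableRel G.Adj] (hp : IsParentMap G r p) (s : V) :
    #{u | G.Adj s u ∧ R s u} ≤ #{v ∈ childrenBy p r R | s = v ∨ s = p v} := by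
  refine card_le_card_of_injOn (fun u => if p u = s then u else s) (fun u hu => ?_) ?_
  · obtain ⟨hsu, hR⟩ := (mem_filter.1 hu).2
    simp only [coe_filter, Set.mem_ofPred_eq, childrenBy, mem_filter, mem_univ, true_and]
    split_ifs with hps
    · refine ⟨⟨?_, Or.inr (hps ▸ hR)⟩, Or.inr hps.symm⟩
      rintro rfl
      exact hsu.ne (hps.symm.trans hp.map_root)
    · have hpu : p s = u := (hp.eq_or_eq_of_adj hsu).resolve_left hps
      refine ⟨⟨?_, Or.inl (hpu ▸ hR)⟩, Or.inl rfl⟩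
      rintro rfl
      exact hsu.ne (hp.map_root.symm.trans hpu)
  · intro u hu w hw huw
    have hsu := (mem_filter.1 hu).2.1
    have hsw := (mem_filter.1 hw).2.1
    simp only at huw
    split_ifs at huw with hpu hpw hpw
    · exact huw
    · exact absurd huw.symm hsu.ne
    · exact absurd huw hsw.ne
    · rw [← (hp.eq_or_eq_of_adj hsu).resolve_left hpu, ← (hp.eq_or_eq_of_adj hsw).resolve_left hpw]

/-- Double counting of the pairs (vertex of `S`, `R`-edge at it). -/
theorem mul_card_le_mul_card_childrenBy [DecidableRel G.Adj] (hp : IsParentMap G r p)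
    {S : Finset V} {k m : ℕ} (hk : ∀ s ∈ S, k ≤ #{u | G.Adj s u ∧ R s u})
    (hm : ∀ v ∈ childrenBy p r R, #{s ∈ S | s = v ∨ s = p v} ≤ m) :
    k * #S ≤ m * #(childrenBy p r R) := by
  rw [mul_comm k, mul_comm m, ← smul_eq_mul, ← smul_eq_mul]
  exact card_nsmul_le_card_nsmul (fun s v => s = v ∨ s = p v)
    (fun s hs => (hk s hs).trans (hp.card_adj_le_card_childrenBy s)) hm

end IsParentMap

theorem card_endpoints_le_one {S : Finset V} (hR : ∀ s t, R s t → t ∉ S) {v : V}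
    (hv : v ∈ childrenBy p r R) : #{s ∈ S | s = v ∨ s = p v} ≤ 1 := by
  have hout : v ∉ S ∨ p v ∉ S := by
    simp only [childrenBy, mem_filter, mem_univ, true_and] at hv
    rcases hv.2 with h | h
    exacts [Or.inr (hR _ _ h), Or.inl (hR _ _ h)]
  refine card_le_one.2 fun a ha b hb => ?_
  simp only [mem_filter] at ha hb
  grind

theorem card_childrenBy_or {R' : V → V → Prop} [DecidableRel R']
    (h : ∀ s t, R s t → ¬ R' s t ∧ ¬ R' t s) :
    #(childrenBy p r fun s t => R s t ∨ R' s t) = #(childrenBy p r R) + #(childrenBy p r R') := by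
  rw [← card_union_of_disjoint]
  · congr 1
    ext v
    simp only [childrenBy, mem_filter, mem_univ, true_and, mem_union]
    tauto
  · refine disjoint_filter.2 fun v _ hR hR' => ?_
    rcases hR.2 with h1 | h1 <;> rcases hR'.2 with h2 | h2
    exacts [(h _ _ h1).1 h2, (h _ _ h1).2 h2, (h _ _ h1).2 h2, (h _ _ h1).1 h2]

theorem card_childrenBy_add_one_le {U : Finset V} (hU : ∀ s t, R s t → s ∈ U ∧ t ∈ U)
    (hr : r ∈ U) : #(childrenBy p r R) + 1 ≤ #U := by
  rw [← card_erase_add_one hr, add_le_add_iff_right]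
  refine card_le_card fun v hv => ?_
  simp only [childrenBy, mem_filter, mem_univ, true_and] at hv
  rcases hv with ⟨hvr, h | h⟩
  exacts [mem_erase.2 ⟨hvr, (hU _ _ h).1⟩, mem_erase.2 ⟨hvr, (hU _ _ h).2⟩]

end ParentMap

section ValueCounts

variable {V : Type*} [Fintype V] {f : V → ℕ}

theorem sum_add_card_zeros_of_le_three (hf : ∀ v, f v ≤ 3) :
    ∑ v, f v + #{v | f v = 0} = Fintype.card V + #{v | f v = 2} + 2 * #{v | f v = 3} := by
  rw [card_filter, card_filter, card_filter, ← card_univ, card_eq_sum_ones, mul_sum,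
    ← sum_add_distrib, ← sum_add_distrib, ← sum_add_distrib]
  exact sum_congr rfl fun v _ => by have := hf v; interval_cases f v <;> rfl

theorem sum_card_fibers_eq_card_of_le_three (hf : ∀ v, f v ≤ 3) :
    #{v | f v = 0} + #{v | f v = 1} + #{v | f v = 2} + #{v | f v = 3} = Fintype.card V := by
  rw [card_filter, card_filter, card_filter, card_filter, ← card_univ, card_eq_sum_ones,
    ← sum_add_distrib, ← sum_add_distrib, ← sum_add_distrib]
  exact sum_congr rfl fun v _ => by have := hf v; interval_cases f v <;> rfl

end ValueCounts

theorem IsStar.of_forall_adj {V : Type*} {G : SimpleGraph V} (hG : G.IsAcyclic) {x : V}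
    (hx : ∀ v, v ≠ x → G.Adj v x) : IsStar G := by
  refine ⟨x, fun a b hab => ?_⟩
  by_contra! h
  classical
  exact hG.cliqueFree le_rfl {a, b, x} (is3Clique_triple_iff.2 ⟨hab, hx a h.1, hx b h.2⟩)

theorem le_rdrNum {V : Type*} [Fintype V] {G : SimpleGraph V} {k : ℕ}
    (h : ∀ f, IsRDRD G f → k ≤ ∑ v, f v) : k ≤ rdrNum G :=
  le_csInf ⟨_, fun _ => 3, ⟨fun _ => le_rfl, by simp, by simp, by simp⟩, rfl⟩
    fun _ ⟨f, hf, hk⟩ => hk ▸ h f hf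

namespace IsRDRD

variable {V : Type*} [Fintype V] {G : SimpleGraph V} {f : V → ℕ}

theorem two_le_of_ne_zero [Nonempty V] (hf : IsRDRD G f) (hG : G.IsAcyclic)
    (hstar : ¬ IsStar G) (h0 : ∀ v, f v ≠ 0) :
    2 ≤ #{v | f v = 2} + 2 * #{v | f v = 3} := by
  by_contra! h
  have h3 (v : V) : f v ≠ 3 :=
    filter_eq_empty_iff.1 (card_eq_zero.1 (by omega : #{v | f v = 3} = 0)) (mem_univ v)
  have h12 (v : V) : f v = 1 ∨ f v = 2 := by have := hf.1 v; have := h0 v; have := h3 v; omega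
  have hup (v : V) (hv : f v = 1) : ∃ u, G.Adj v u ∧ f u = 2 := by
    obtain ⟨u, hvu, hu⟩ := hf.2.2.1 v hv
    exact ⟨u, hvu, by have := h12 u; omega⟩
  have huniq (v w : V) (hv : f v = 2) (hw : f w = 2) : v = w :=
    (card_le_one (s := {v | f v = 2})).1 (by omega) v (by simpa using hv) w (by simpa using hw)
  obtain ⟨x, hx⟩ : ∃ x, f x = 2 := by
    obtain ⟨v⟩ := ‹Nonempty V›
    rcases h12 v with hv | hv
    exacts [(hup v hv).imp fun _ => And.right, ⟨v, hv⟩]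
  refine hstar (IsStar.of_forall_adj (x := x) hG fun v hvx => ?_)
  obtain ⟨u, hvu, hu⟩ := hup v ((h12 v).resolve_right fun hv => hvx (huniq v x hv hx))
  exact huniq u x hu hx ▸ hvu

theorem card_zero_add_two_le {r : V} {p : V → V} (hf : IsRDRD G f) (hp : IsParentMap G r p)
    (hr : f r = 0) : #{v | f v = 0} + 2 ≤ #{v | f v = 2} + 2 * #{v | f v = 3} := by
  classical
  obtain ⟨hle, hzero, hone, hrestr⟩ := hf
  set E₀₀ := childrenBy p r fun s t => f s = 0 ∧ f t = 0
  set E₀₃ := childrenBy p r fun s t => f s = 0 ∧ f t = 3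
  set E₀₂ := childrenBy p r fun s t => f s = 0 ∧ f t = 2
  set E₁ := childrenBy p r fun s t => f s = 1 ∧ 2 ≤ f t
  set A := ({v | f v = 0} : Finset V).filter fun v => ∃ u, G.Adj v u ∧ f u = 3
  set B := ({v | f v = 0} : Finset V).filter fun v => ¬ ∃ u, G.Adj v u ∧ f u = 3
  have hAB : #A + #B = #{v | f v = 0} := card_filter_add_card_filter_not _
  have hall : #E₀₀ + #E₀₃ + #E₀₂ + #E₁ + 1 ≤ Fintype.card V := by
    rw [← card_childrenBy_or (by intro s t; omega), ← card_childrenBy_or (by intro s t; omega),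
      ← card_childrenBy_or (by intro s t; omega), ← card_univ]
    exact card_childrenBy_add_one_le (by simp) (mem_univ r)
  have hzero_three : #E₀₀ + #E₀₃ + 1 ≤ #{v | f v = 0} + #{v | f v = 3} := by
    rw [← card_childrenBy_or (by intro s t; omega), ← card_union_of_disjoint
      (disjoint_filter.2 fun _ _ h h' => by omega), ← filter_or]
    exact card_childrenBy_add_one_le (by simp; omega) (by simp [hr])
  have hV₀ : 1 * #{v | f v = 0} ≤ 2 * #E₀₀ := by
    refine hp.mul_card_le_mul_card_childrenBy (fun s hs => ?_) fun v _ => card_endpoints_le_two _ v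
    have hs0 : f s = 0 := (mem_filter.1 hs).2
    obtain ⟨u, hsu, hu⟩ := hrestr s hs0
    exact one_le_card.2 ⟨u, by simp [hsu, hs0, hu]⟩
  have hA : 1 * #A ≤ 1 * #E₀₃ := by
    refine hp.mul_card_le_mul_card_childrenBy (fun s hs => ?_)
      fun v => card_endpoints_le_one fun s t h ht => by simp [A] at ht; omega
    obtain ⟨hs0, u, hsu, hu⟩ := mem_filter.1 hs
    exact one_le_card.2 ⟨u, by simp [hsu, (mem_filter.1 hs0).2, hu]⟩
  have hB : 2 * #B ≤ 1 * #E₀₂ := by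
    refine hp.mul_card_le_mul_card_childrenBy (fun s hs => ?_)
      fun v => card_endpoints_le_one fun s t h ht => by simp [B] at ht; omega
    obtain ⟨hs0, hs3⟩ := mem_filter.1 hs
    have hs0 : f s = 0 := (mem_filter.1 hs0).2
    obtain ⟨u, w, hsu, hsw, huw, hu, hw⟩ := (hzero s hs0).resolve_left hs3
    exact one_lt_card.2 ⟨u, by simp [hsu, hs0, hu], w, by simp [hsw, hs0, hw], huw⟩
  have hV₁ : 1 * #{v | f v = 1} ≤ 1 * #E₁ := by
    refine hp.mul_card_le_mul_card_childrenBy (fun s hs => ?_)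
      fun v => card_endpoints_le_one fun s t h ht => by simp at ht; omega
    have hs1 : f s = 1 := (mem_filter.1 hs).2
    obtain ⟨u, hsu, hu⟩ := hone s hs1
    exact one_le_card.2 ⟨u, by simp [hsu, hs1, hu]⟩
  have hcard := sum_card_fibers_eq_card_of_le_three hle
  omega

end IsRDRD

theorem stmt_12_general {V : Type*} [Fintype V] (G : SimpleGraph V) (hT : G.IsTree)
    (hstar : ¬ IsStar G) :
    Fintype.card V + 2 ≤ rdrNum G := by
  refine le_rdrNum fun f hf => ?_
  have hweight := sum_add_card_zeros_of_le_three hf.1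
  suffices #{v | f v = 0} + 2 ≤ #{v | f v = 2} + 2 * #{v | f v = 3} by omega
  by_cases h0 : ∀ v, f v ≠ 0
  · have := hT.connected.nonempty
    have hV₀ : #{v | f v = 0} = 0 := card_eq_zero.2 (filter_false_of_mem fun v _ => h0 v)
    have := hf.two_le_of_ne_zero hT.isAcyclic hstar h0
    omega
  · obtain ⟨r, hr⟩ := not_forall_not.1 h0
    obtain ⟨p, hp⟩ := hT.exists_isParentMap r
    exact hf.card_zero_add_two_le hp hr

theorem stmt_12 {V : Type*} [Fintype V] (G : SimpleGraph V) (hT : G.IsTree)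
    (hn : 2 ≤ Fintype.card V) (hstar : ¬ IsStar G) :
    Fintype.card V + 2 ≤ rdrNum G :=
  stmt_12_general G hT hstar
end

section
/- For any tree T of order n ≥ 2, γ_rdR(T) ≥ n + 1, with equality if and only if T is a star K_{1,n−1}. -/
open Finset

/-!
Let `f` be an RDRD function with level sets `A, C, D` for the values `0, 2, 3`; then
`∑ f - n = #C + 2 #D - #A`. An induced subforest on `s` has fewer than `#s` edges. Adding this
bound for `A ∪ D` and for `A ∪ C ∪ D` bounds `∑_{a ∈ A} (deg_A a + 2 deg_D a + deg_C a)` by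
`2 #A + #C + 2 #D - 2`, while the RDRD conditions make every summand at least `3`; so
`∑ f ≥ n + 2` as soon as `f` takes the value `0`. Otherwise `f ≥ 1` takes a value `≥ 2`, so
`∑ f ≥ n + 1`, and equality leaves a single vertex of value `2`, adjacent to all others; it is the
centre of a star, since an edge avoiding it would close a triangle.
-/

open SimpleGraph

namespace SimpleGraph
variable {V : Type*} {G : SimpleGraph V}

lemma IsAcyclic.card_edgeFinset_lt [Fintype V] [Nonempty V] [Fintype G.edgeSet]
    (h : G.IsAcyclic) : #G.edgeFinset < Fintype.card V := by
  classical
  obtain ⟨F, hGF, -, hF, hreach⟩ :=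
    (⊤ : SimpleGraph V).exists_isAcyclic_reachable_eq_le_of_le_of_isAcyclic le_top h
  have hFT : F.IsTree :=
    ⟨Connected.mk fun u v => hreach ▸ connected_top.preconnected u v, hF⟩
  have := hFT.card_edgeFinset
  have := card_le_card (edgeFinset_mono hGF)
  omega

lemma Connected.adj_of_isStar_center (hG : G.Connected) {x : V}
    (hx : ∀ ⦃a b : V⦄, G.Adj a b → a = x ∨ b = x) {v : V} (hv : v ≠ x) : G.Adj v x := by
  obtain ⟨p⟩ := hG.preconnected v x
  cases p with
  | nil => exact absurd rfl hv
  | cons h _ => exact (hx h).resolve_left hv ▸ h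

variable [DecidableRel G.Adj]

lemma card_dart_induce (s : Finset V) :
    Fintype.card (G.induce (s : Set V)).Dart = #(G.interedges s s) := by
  rw [← card_univ]
  refine card_bij (fun d _ => (d.fst.1, d.snd.1)) (fun d _ => ?_) (fun d _ d' _ h => ?_)
    (fun x hx => ?_)
  · exact (G.mem_interedges_iff).2 ⟨d.fst.2, d.snd.2, d.adj⟩
  · simp only [Prod.mk.injEq] at h
    exact (Dart.ext_iff _ _).2 (Prod.ext (Subtype.ext h.1) (Subtype.ext h.2))
  · obtain ⟨h1, h2, hadj⟩ := (G.mem_interedges_iff).1 hx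
    exact ⟨⟨(⟨x.1, h1⟩, ⟨x.2, h2⟩), hadj⟩, mem_univ _, rfl⟩

lemma IsAcyclic.card_interedges_self_add_two_le (h : G.IsAcyclic) {s : Finset V}
    (hs : s.Nonempty) : #(G.interedges s s) + 2 ≤ 2 * #s := by
  have : Nonempty (s : Set V) := hs.to_subtype
  have hlt := (h.induce (s : Set V)).card_edgeFinset_lt
  rw [← card_dart_induce, dart_card_eq_twice_card_edges]
  simp only [coe_sort_coe, Fintype.card_coe] at hlt
  omega

lemma card_interedges_eq_sum (s t : Finset V) :
    #(G.interedges s t) = ∑ a ∈ s, #{b ∈ t | G.Adj a b} := by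
  rw [interedges_def, card_filter, sum_product]
  simp only [card_filter]

variable [DecidableEq V]

lemma card_interedges_union_left {s s' : Finset V} (t : Finset V) (h : Disjoint s s') :
    #(G.interedges (s ∪ s') t) = #(G.interedges s t) + #(G.interedges s' t) := by
  simp only [card_interedges_eq_sum, sum_union h]

lemma card_interedges_union_right {t t' : Finset V} (s : Finset V) (h : Disjoint t t') :
    #(G.interedges s (t ∪ t')) = #(G.interedges s t) + #(G.interedges s t') := by
  rw [interedges_def, interedges_def, interedges_def, product_union, filter_union,
    card_union_of_disjoint]
  exact disjoint_filter_filter (disjoint_product.2 (Or.inr h))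

lemma card_interedges_self_add_le {s t : Finset V} (h : Disjoint s t) :
    #(G.interedges s s) + 2 * #(G.interedges s t) ≤ #(G.interedges (s ∪ t) (s ∪ t)) := by
  have := G.symm
  have hcomm : #(G.interedges t s) = #(G.interedges s t) := Rel.card_interedges_comm t s
  rw [card_interedges_union_left _ h, card_interedges_union_right _ h,
    card_interedges_union_right _ h]
  omega

lemma IsAcyclic.card_add_two_le_card_add_two_mul_card (hG : G.IsAcyclic) {A C D : Finset V}
    (hA : A.Nonempty) (hAC : Disjoint A C) (hAD : Disjoint A D) (hCD : Disjoint C D)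
    (hAA : ∀ a ∈ A, 1 ≤ #{b ∈ A | G.Adj a b})
    (hACD : ∀ a ∈ A, 2 ≤ 2 * #{b ∈ D | G.Adj a b} + #{b ∈ C | G.Adj a b}) :
    #A + 2 ≤ #C + 2 * #D := by
  have hAA' : #A ≤ #(G.interedges A A) := by
    rw [card_interedges_eq_sum]
    simpa using card_nsmul_le_sum A _ 1 hAA
  have hACD' : 2 * #A ≤ 2 * #(G.interedges A D) + #(G.interedges A C) := by
    rw [card_interedges_eq_sum, card_interedges_eq_sum, mul_sum, ← sum_add_distrib]
    simpa [mul_comm] using card_nsmul_le_sum A _ 2 hACD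
  have hA_CD : Disjoint A (C ∪ D) := disjoint_union_right.2 ⟨hAC, hAD⟩
  have h1 := hG.card_interedges_self_add_two_le (hA.mono (subset_union_left (s₂ := D)))
  have h2 := hG.card_interedges_self_add_two_le (hA.mono (subset_union_left (s₂ := C ∪ D)))
  have h3 := card_interedges_self_add_le (G := G) hAD
  have h4 := card_interedges_self_add_le (G := G) hA_CD
  rw [card_interedges_union_right _ hCD] at h4
  rw [card_union_of_disjoint hAD] at h1
  rw [card_union_of_disjoint hA_CD, card_union_of_disjoint hCD] at h2
  omega

end SimpleGraph

lemma isRDRD_const_three {V : Type*} (G : SimpleGraph V) : IsRDRD G fun _ => 3 := by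
  refine ⟨fun _ => le_rfl, ?_, ?_, ?_⟩ <;> simp

section RDRD

variable {V : Type*} [Fintype V] {G : SimpleGraph V} {f : V → ℕ}

lemma IsStar.exists_isRDRD_sum_eq (hG : G.Connected) (hs : IsStar G) :
    ∃ f : V → ℕ, IsRDRD G f ∧ ∑ v, f v = Fintype.card V + 1 := by
  classical
  obtain ⟨x, hx⟩ := hs
  refine ⟨fun v => 1 + if v = x then 1 else 0, ⟨fun v => ?_, by simp, fun v hv => ?_, by simp⟩,
    by simp [sum_add_distrib]⟩
  · dsimp only; split_ifs <;> omega
  · have hvx : v ≠ x := fun h => by simp [h] at hv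
    exact ⟨x, hG.adj_of_isStar_center hx hvx, by simp⟩

lemma card_add_card_add_two_mul_card_eq (hf : ∀ v, f v ≤ 3) :
    Fintype.card V + #{v | f v = 2} + 2 * #{v | f v = 3} = ∑ v, f v + #{v | f v = 0} := by
  have key : ∀ v, 1 + (if f v = 2 then 1 else 0) + 2 * (if f v = 3 then 1 else 0)
      = f v + if f v = 0 then 1 else 0 := fun v => by
    have := hf v
    split_ifs <;> omega
  calc _ = ∑ v, (1 + (if f v = 2 then 1 else 0) + 2 * (if f v = 3 then 1 else 0)) := by
        simp only [sum_add_distrib, ← mul_sum, sum_boole, sum_const, card_univ, smul_eq_mul,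
          mul_one, Nat.cast_id]
    _ = ∑ v, (f v + if f v = 0 then 1 else 0) := sum_congr rfl fun v _ => key v
    _ = _ := by simp only [sum_add_distrib, sum_boole, Nat.cast_id]

lemma card_add_card_le_sum {s : Finset V} (hf : ∀ v, 1 ≤ f v) (hs : ∀ v ∈ s, 2 ≤ f v) :
    Fintype.card V + #s ≤ ∑ v, f v := by
  classical
  calc Fintype.card V + #s = ∑ v, (1 + if v ∈ s then 1 else 0) := by
        simp [sum_add_distrib]
    _ ≤ ∑ v, f v := sum_le_sum fun v _ => by
        split_ifs with h
        · exact hs v h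
        · exact hf v

lemma IsRDRD.card_add_two_le_sum (hG : G.IsAcyclic) (hf : IsRDRD G f) (hz : ∃ v, f v = 0) :
    Fintype.card V + 2 ≤ ∑ v, f v := by
  classical
  obtain ⟨hle, hzero, -, hrestr⟩ := hf
  have hcore := hG.card_add_two_le_card_add_two_mul_card
    (A := {v | f v = 0}) (C := {v | f v = 2}) (D := {v | f v = 3})
    (by simpa [Finset.Nonempty] using hz)
    (disjoint_filter.2 fun _ _ h1 h2 => by omega)
    (disjoint_filter.2 fun _ _ h1 h2 => by omega)
    (disjoint_filter.2 fun _ _ h1 h2 => by omega)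
    (fun a ha => ?_) (fun a ha => ?_)
  · have := card_add_card_add_two_mul_card_eq hle
    omega
  · obtain ⟨u, hau, hu⟩ := hrestr a (mem_filter.1 ha).2
    exact card_pos.2 ⟨u, by simp [hau, hu]⟩
  · rcases hzero a (mem_filter.1 ha).2 with ⟨u, hau, hu⟩ | ⟨u, w, hau, haw, huw, hu, hw⟩
    · have : 0 < #{b ∈ ({v | f v = 3} : Finset V) | G.Adj a b} :=
        card_pos.2 ⟨u, by simp [hau, hu]⟩
      omega
    · have : 2 ≤ #{b ∈ ({v | f v = 2} : Finset V) | G.Adj a b} :=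
        (card_pair huw).symm.trans_le <|
          card_le_card (insert_subset (by simp [hau, hu]) (by simp [haw, hw]))
      omega

omit [Fintype V] in
lemma IsRDRD.exists_two_le [Nonempty V] (hf : IsRDRD G f) (hpos : ∀ v, f v ≠ 0) :
    ∃ x, 2 ≤ f x := by
  obtain ⟨v⟩ := ‹Nonempty V›
  by_cases hv : f v = 1
  · obtain ⟨u, -, hu⟩ := hf.2.2.1 v hv
    exact ⟨u, hu⟩
  · exact ⟨v, by have := hpos v; omega⟩

lemma IsRDRD.card_add_one_le_sum [Nonempty V] (hG : G.IsAcyclic) (hf : IsRDRD G f) :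
    Fintype.card V + 1 ≤ ∑ v, f v := by
  by_cases hz : ∃ v, f v = 0
  · have := hf.card_add_two_le_sum hG hz
    omega
  · simp only [not_exists] at hz
    obtain ⟨x, hx⟩ := hf.exists_two_le hz
    simpa using card_add_card_le_sum (s := {x}) (fun v => Nat.one_le_iff_ne_zero.2 (hz v))
      (by simpa using hx)

lemma IsRDRD.isStar_of_sum_eq [Nonempty V] (hG : G.IsAcyclic) (hf : IsRDRD G f)
    (heq : ∑ v, f v = Fintype.card V + 1) : IsStar G := by
  classical
  have hpos : ∀ v, f v ≠ 0 := fun v hv => by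
    have := hf.card_add_two_le_sum hG ⟨v, hv⟩
    omega
  obtain ⟨x, hx⟩ := hf.exists_two_le hpos
  have hone : ∀ v ≠ x, f v = 1 := by
    have hcard := card_add_card_le_sum (s := {v | 2 ≤ f v})
      (fun v => Nat.one_le_iff_ne_zero.2 (hpos v)) (fun v hv => (mem_filter.1 hv).2)
    have huniq := card_le_one.1 (by omega : #{v | 2 ≤ f v} ≤ 1)
    intro v hv
    by_contra hv1
    have hv2 : v ∈ ({v | 2 ≤ f v} : Finset V) := mem_filter.2 ⟨mem_univ v, by grind⟩
    exact hv (huniq v hv2 x (by simpa using hx))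
  have hadj : ∀ v ≠ x, G.Adj v x := fun v hv => by
    obtain ⟨u, hvu, hu⟩ := hf.2.2.1 v (hone v hv)
    obtain rfl : u = x := by
      by_contra hux
      have := hone u hux
      omega
    exact hvu
  refine ⟨x, fun a b hab => ?_⟩
  by_contra! h
  exact hG.cliqueFree le_rfl {a, b, x} (is3Clique_triple_iff.2 ⟨hab, hadj a h.1, hadj b h.2⟩)

end RDRD

theorem stmt_13_general {V : Type*} [Fintype V] (G : SimpleGraph V) (hT : G.IsTree) :
    Fintype.card V + 1 ≤ rdrNum G ∧ (rdrNum G = Fintype.card V + 1 ↔ IsStar G) := by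
  have : Nonempty V := hT.connected.nonempty
  obtain ⟨f, hf, hsum⟩ : rdrNum G ∈ {k | ∃ f : V → ℕ, IsRDRD G f ∧ ∑ v, f v = k} :=
    Nat.sInf_mem ⟨_, fun _ => 3, isRDRD_const_three G, rfl⟩
  have hlb : Fintype.card V + 1 ≤ rdrNum G := hsum ▸ hf.card_add_one_le_sum hT.isAcyclic
  refine ⟨hlb, fun heq => hf.isStar_of_sum_eq hT.isAcyclic (hsum.trans heq), fun hs => ?_⟩
  obtain ⟨g, hg, hgsum⟩ := hs.exists_isRDRD_sum_eq hT.connected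
  exact le_antisymm (hgsum ▸ Nat.sInf_le ⟨g, hg, rfl⟩) hlb

theorem stmt_13 {V : Type*} [Fintype V] (G : SimpleGraph V) (hT : G.IsTree)
    (hn : 2 ≤ Fintype.card V) :
    Fintype.card V + 1 ≤ rdrNum G ∧ (rdrNum G = Fintype.card V + 1 ↔ IsStar G) :=
  stmt_13_general G hT
end
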